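/- With b(t) = 4/(t+α), k(t) = -1/(t+α)³, and α ≥ 1, the eigenvalues λ±(t) = (-b ± √(b² - 4k))/2 satisfy |λ±'(t)| ≤ 4/α² + 3/(4α³) ≤ 19/(4α²) for all t ≥ 0. -/

import Mathlib

/-!
Write `u = t + α`, so `b' = -4 / u ^ 2` and `k' = 3 / u ^ 4`. Since `k ≤ 0`, the discriminant
`b ^ 2 - 4 k` is at least `b ^ 2`, so differentiating `λ± = (-b ± √(b ^ 2 - 4 k)) / 2` gives
`|λ±'| ≤ |b'| + |k'| / |b| = 4 / u ^ 2 + 3 / (4 u ^ 3)`, which decreases in `u ≥ α`.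
-/

open Set Real MeasureTheory Filter

noncomputable def bfun (α t : ℝ) : ℝ := 4 / (t + α)

noncomputable def kfun (α t : ℝ) : ℝ := -1 / (t + α) ^ 3

/-- Eigenvalues λ± of the matrix [[0,1],[-k,-b]]. -/
noncomputable def lamP (α t : ℝ) : ℝ :=
  (-bfun α t + Real.sqrt (bfun α t ^ 2 - 4 * kfun α t)) / 2

noncomputable def lamM (α t : ℝ) : ℝ :=
  (-bfun α t - Real.sqrt (bfun α t ^ 2 - 4 * kfun α t)) / 2

lemma abs_div_two_sqrt_le {b b' k' D : ℝ} (hb : b ≠ 0) (hD : b ^ 2 ≤ D) :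
    |(2 * b * b' - 4 * k') / (2 * √D)| ≤ |b'| + 2 * (|k'| / |b|) := by
  have hb' : 0 < |b| := abs_pos.mpr hb
  have hsqrt : |b| ≤ √D := Real.abs_le_sqrt hD
  have hsqrt0 : 0 < √D := hb'.trans_le hsqrt
  calc |(2 * b * b' - 4 * k') / (2 * √D)|
      = |2 * b * b' - 4 * k'| / (2 * √D) := by
        rw [abs_div, abs_of_pos (by positivity : (0:ℝ) < 2 * √D)]
    _ ≤ (2 * |b| * |b'| + 4 * |k'|) / (2 * |b|) := by
        gcongr
        calc |2 * b * b' - 4 * k'| ≤ |2 * b * b'| + |4 * k'| := abs_sub _ _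
          _ = 2 * |b| * |b'| + 4 * |k'| := by simp [abs_mul]
    _ = |b'| + 2 * (|k'| / |b|) := by field_simp; ring

theorem abs_deriv_quadratic_root_le {b k : ℝ → ℝ} {b' k' ε t : ℝ} (hε : |ε| ≤ 1)
    (hb : HasDerivAt b b' t) (hk : HasDerivAt k k' t) (hb0 : b t ≠ 0) (hk0 : k t ≤ 0) :
    |deriv (fun s => (-b s + ε * √(b s ^ 2 - 4 * k s)) / 2) t| ≤ |b'| + |k'| / |b t| := by
  have hD : b t ^ 2 ≤ b t ^ 2 - 4 * k t := by linarith
  have hD0 : b t ^ 2 - 4 * k t ≠ 0 := (lt_of_lt_of_le (by positivity) hD).ne'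
  have hdisc : HasDerivAt (fun s => b s ^ 2 - 4 * k s) (2 * b t * b' - 4 * k') t := by
    refine ((hb.pow 2).sub (hk.const_mul 4)).congr_deriv ?_
    push_cast
    ring
  have hroot : HasDerivAt (fun s => (-b s + ε * √(b s ^ 2 - 4 * k s)) / 2)
      ((-b' + ε * ((2 * b t * b' - 4 * k') / (2 * √(b t ^ 2 - 4 * k t)))) / 2) t :=
    (hb.neg.add ((hdisc.sqrt hD0).const_mul ε)).div_const 2
  rw [hroot.deriv]
  set X := (2 * b t * b' - 4 * k') / (2 * √(b t ^ 2 - 4 * k t))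
  have hX : |X| ≤ |b'| + 2 * (|k'| / |b t|) := abs_div_two_sqrt_le hb0 hD
  have hεX : |ε * X| ≤ |X| := by
    rw [abs_mul]
    exact mul_le_of_le_one_left (abs_nonneg X) hε
  calc |(-b' + ε * X) / 2| = |-b' + ε * X| / 2 := by rw [abs_div, abs_two]
    _ ≤ (|b'| + |X|) / 2 := by
        gcongr
        exact (abs_add_le _ _).trans (by rw [abs_neg]; linarith)
    _ ≤ |b'| + |k'| / |b t| := by linarith

lemma hasDerivAt_bfun {α t : ℝ} (h : t + α ≠ 0) : HasDerivAt (bfun α) (-4 / (t + α) ^ 2) t := by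
  have : HasDerivAt (fun s => 4 / (s + α)) ((0 * (t + α) - 4 * 1) / (t + α) ^ 2) t :=
    (hasDerivAt_const t 4).div ((hasDerivAt_id' t).add_const α) h
  exact this.congr_deriv (by ring)

lemma hasDerivAt_kfun {α t : ℝ} (h : t + α ≠ 0) : HasDerivAt (kfun α) (3 / (t + α) ^ 4) t := by
  have : HasDerivAt (fun s => -1 / (s + α) ^ 3)
      ((0 * (t + α) ^ 3 - -1 * (3 * (t + α) ^ 2 * 1)) / ((t + α) ^ 3) ^ 2) t :=
    (hasDerivAt_const t (-1)).div (((hasDerivAt_id' t).add_const α).pow 3) (pow_ne_zero 3 h)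
  exact this.congr_deriv (by field_simp; ring)

lemma bfun_pos {α t : ℝ} (h : 0 < t + α) : 0 < bfun α t := div_pos four_pos h

lemma kfun_nonpos {α t : ℝ} (h : 0 < t + α) : kfun α t ≤ 0 :=
  div_nonpos_of_nonpos_of_nonneg (by norm_num) (by positivity)

lemma abs_deriv_eigenvalue_le {α t ε : ℝ} (hε : |ε| ≤ 1) (hα : 0 < α) (ht : 0 ≤ t) :
    |deriv (fun s => (-bfun α s + ε * √(bfun α s ^ 2 - 4 * kfun α s)) / 2) t|
      ≤ 4 / α ^ 2 + 3 / (4 * α ^ 3) := by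
  have hu : 0 < t + α := by linarith
  have hαu : α ≤ t + α := by linarith
  calc _ ≤ |-4 / (t + α) ^ 2| + |3 / (t + α) ^ 4| / |bfun α t| :=
        abs_deriv_quadratic_root_le hε (hasDerivAt_bfun hu.ne') (hasDerivAt_kfun hu.ne')
          (bfun_pos hu).ne' (kfun_nonpos hu)
    _ = 4 / (t + α) ^ 2 + 3 / (4 * (t + α) ^ 3) := by
        rw [neg_div, abs_neg, abs_of_pos (bfun_pos hu), abs_of_pos (by positivity),
          abs_of_pos (by positivity), bfun]
        field_simp
    _ ≤ 4 / α ^ 2 + 3 / (4 * α ^ 3) := by gcongr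

lemma eigenvalue_bound_le {α : ℝ} (hα : 1 ≤ α) :
    4 / α ^ 2 + 3 / (4 * α ^ 3) ≤ 19 / (4 * α ^ 2) := by
  have hα0 : 0 < α := by linarith
  rw [div_add_div _ _ (by positivity) (by positivity), div_le_div_iff₀ (by positivity) (by positivity)]
  nlinarith [pow_pos hα0 4]

theorem stmt_12 (α : ℝ) (hα : 1 ≤ α) :
    (∀ t ≥ (0 : ℝ),
      |deriv (lamP α) t| ≤ 4 / α ^ 2 + 3 / (4 * α ^ 3)
      ∧ |deriv (lamM α) t| ≤ 4 / α ^ 2 + 3 / (4 * α ^ 3))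
    ∧ 4 / α ^ 2 + 3 / (4 * α ^ 3) ≤ 19 / (4 * α ^ 2) := by
  refine ⟨fun t ht => ?_, eigenvalue_bound_le hα⟩
  have hα0 : 0 < α := by linarith
  have hP : lamP α = fun s => (-bfun α s + 1 * √(bfun α s ^ 2 - 4 * kfun α s)) / 2 := by
    funext s; simp [lamP]
  have hM : lamM α = fun s => (-bfun α s + -1 * √(bfun α s ^ 2 - 4 * kfun α s)) / 2 := by
    funext s; simp [lamM, sub_eq_add_neg]
  exact ⟨hP ▸ abs_deriv_eigenvalue_le (by norm_num) hα0 ht,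
    hM ▸ abs_deriv_eigenvalue_le (by norm_num) hα0 ht⟩
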